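/- Let V and E be finite types and let M : Matrix V E ℝ be the incidence matrix of a simple oriented hypergraph (all entries of M lie in {-1, 0, 1}). Let P be the type of adjacencies of M: pairs (e, s) with e : E and s : Sym2 V a non-diagonal unordered pair {i, j} (i ≠ j) such that M i e ≠ 0 and M j e ≠ 0. Define the incidence matrix of the strict 2-section M₂ : Matrix V P ℝ by M₂ v (e, s) = M v e if v ∈ s and M₂ v (e, s) = 0 otherwise. Then A(M₂) = A(M): the strict 2-section has the same adjacency matrix as the original oriented hypergraph. -/

import Mathlib

open Matrix

/-- The adjacency matrix of the oriented hypergraph with incidence matrix `N`: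
`A(N) i j = -∑ y, N i y * N j y` for `i ≠ j`, and `0` on the diagonal. -/
noncomputable def adjMat {V Y : Type*} [Fintype Y] [DecidableEq V]
    (N : Matrix V Y ℝ) : Matrix V V ℝ :=
  fun i j => if i = j then 0 else -∑ y, N i y * N j y

/-- The adjacencies of the oriented hypergraph with incidence matrix `M`:
pairs `(e, {i,j})` with `i ≠ j` and both `M i e` and `M j e` nonzero. -/
def Adjacencies {V E : Type*} (M : Matrix V E ℝ) : Type _ :=
  {p : E × Sym2 V // ¬ p.2.IsDiag ∧ ∀ v ∈ p.2, M v p.1 ≠ 0}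

noncomputable instance {V E : Type*} [Fintype V] [Fintype E] [DecidableEq V]
    (M : Matrix V E ℝ) : Fintype (Adjacencies M) := by
  classical
  unfold Adjacencies
  infer_instance

/-- The incidence matrix of the strict 2-section: each adjacency `(e, {i,j})`
becomes a 2-edge incident to `i` and `j`, inheriting the incidence signs from `e`. -/
noncomputable def twoSectionInc {V E : Type*} [DecidableEq V] (M : Matrix V E ℝ) :
    Matrix V (Adjacencies M) ℝ :=
  fun v p => if v ∈ p.1.2 then M v p.1.1 else 0

theorem strict_two_section_same_adjacency
    {V E : Type*} [Fintype V] [Fintype E] [DecidableEq V]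
    (M : Matrix V E ℝ) (hM : ∀ i e, M i e ∈ ({-1, 0, 1} : Set ℝ)) :
    adjMat (twoSectionInc M) = adjMat M := by
  classical
  funext i j
  unfold adjMat
  by_cases h : i = j
  · simp [h]
  · simp only [if_neg h]
    congr 1
    rw [← Finset.sum_filter_ne_zero Finset.univ
        (f := fun p => twoSectionInc M i p * twoSectionInc M j p),
      ← Finset.sum_filter_ne_zero Finset.univ (f := fun e => M i e * M j e)]
    have key : ∀ p : Adjacencies M,
        twoSectionInc M i p * twoSectionInc M j p ≠ 0 →
        i ∈ p.1.2 ∧ j ∈ p.1.2 ∧ p.1.2 = s(i, j) ∧ M i p.1.1 * M j p.1.1 ≠ 0 := by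
      intro p hp
      unfold twoSectionInc at hp
      by_cases hi : i ∈ p.1.2
      · by_cases hj : j ∈ p.1.2
        · refine ⟨hi, hj, ?_, by simpa [hi, hj] using hp⟩
          exact (Sym2.mem_and_mem_iff h).mp ⟨hi, hj⟩
        · simp [hj] at hp
      · simp [hi] at hp
    refine Finset.sum_bij' (fun p _ => p.1.1)
      (fun e he => ⟨(e, s(i, j)), ?_, ?_⟩) ?_ ?_ ?_ ?_ ?_
    · exact fun hd => h (Sym2.mk_isDiag_iff.mp hd)
    · intro v hv
      simp only [Finset.mem_filter] at he
      rcases Sym2.mem_iff.mp hv with rfl | rfl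
      · exact left_ne_zero_of_mul he.2
      · exact right_ne_zero_of_mul he.2
    · intro p hp
      simp only [Finset.mem_filter, Finset.mem_univ, true_and] at hp ⊢
      exact (key p hp).2.2.2
    · intro e he
      simp only [Finset.mem_filter, Finset.mem_univ, true_and] at he ⊢
      unfold twoSectionInc
      refine Finset.mem_filter.mpr ⟨Finset.mem_univ _, ?_⟩
      show ((if i ∈ s(i, j) then M i e else 0) * if j ∈ s(i, j) then M j e else 0) ≠ 0
      rw [if_pos (Sym2.mem_mk_left i j), if_pos (Sym2.mem_mk_right i j)]
      exact he
    · intro p hp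
      simp only [Finset.mem_filter, Finset.mem_univ, true_and] at hp
      obtain ⟨_, _, hs, _⟩ := key p hp
      exact Subtype.ext (Prod.ext rfl hs.symm)
    · intro e he
      rfl
    · intro p hp
      simp only [Finset.mem_filter, Finset.mem_univ, true_and] at hp
      obtain ⟨hi, hj, _, _⟩ := key p hp
      unfold twoSectionInc
      simp [hi, hj]
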